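/- arXiv:0911.5724 — 6 statements merged into one kernel-verified Lean document; each statement's English description precedes it below -/
import Mathlib

section
/- Let (M, μ) be a σ-finite measure space, n ≥ 1, and let H ⊆ ℝⁿ be a polarizer. For every measurable function u : M × ℝⁿ → [0, ∞), the polarization u^H is measurable and equimeasurable with u: for every t ≥ 0, (μ ⊗ vol)({(x, y) : u^H(x, y) > t}) = (μ ⊗ vol)({(x, y) : u(x, y) > t}). Consequently, for every 1 ≤ s < ∞, ∫ (u^H)^s d(μ ⊗ vol) = ∫ u^s d(μ ⊗ vol). -/
/-!
With `T (x, y) = (x, σ y)`, the map `T` is a measure-preserving involution of `μ ⊗ vol` that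
exchanges `P = M × H` and its complement up to the null set `M × ∂H`. The superlevel set
`{u^H > t}` is the two-point rearrangement of `S = {u > t}`: it is `S ∪ T⁻¹ S` over `P` and
`S ∩ T⁻¹ S` off `P`. Moving the part off `P` onto `P` with `T` and using inclusion–exclusion,
its measure is `ν (P ∩ S) + ν (P ∩ T⁻¹ S) = ν (P ∩ S) + ν (Pᶜ ∩ S) = ν S`. Equality of all
distribution functions gives equality of the `L^s`-integrals by the layer-cake formula.
-/

open MeasureTheory Metric
open scoped RealInnerProductSpace ENNReal

noncomputable section

/-- Reflection of `ℝⁿ` across the hyperplane `{y : ⟨y, e⟩ = c}`. -/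
def reflectHyp {n : ℕ} (e : EuclideanSpace ℝ (Fin n)) (c : ℝ)
    (y : EuclideanSpace ℝ (Fin n)) : EuclideanSpace ℝ (Fin n) :=
  y - (2 * (⟪y, e⟫ - c)) • e

/-- Polarization of `u : M × ℝⁿ → ℝ` with respect to the polarizer
`H = {y : ⟨y, e⟩ > c}`. -/
def polarize {M : Type*} {n : ℕ} (e : EuclideanSpace ℝ (Fin n)) (c : ℝ)
    (u : M × EuclideanSpace ℝ (Fin n) → ℝ)
    (z : M × EuclideanSpace ℝ (Fin n)) : ℝ :=
  if c < ⟪z.2, e⟫ then max (u z) (u (z.1, reflectHyp e c z.2))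
  else min (u z) (u (z.1, reflectHyp e c z.2))


open Set

section PolarizeSet

variable {α : Type*} [MeasurableSpace α] {ν : Measure α} {T : α → α} {P S : Set α}

def polarizeSet (T : α → α) (P S : Set α) : Set α :=
  P ∩ (S ∪ T ⁻¹' S) ∪ Pᶜ ∩ (S ∩ T ⁻¹' S)

lemma measure_compl_inter_eq_measure_inter_preimage (hT : MeasurePreserving T ν ν)
    (hTT : Function.Involutive T) (hPm : MeasurableSet P) (hP : T ⁻¹' P =ᵐ[ν] Pᶜ)
    {A : Set α} (hA : MeasurableSet A) :
    ν (Pᶜ ∩ A) = ν (P ∩ T ⁻¹' A) :=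
  calc ν (Pᶜ ∩ A) = ν (T ⁻¹' P ∩ A) := measure_congr (hP.symm.inter .rfl)
    _ = ν (T ⁻¹' (P ∩ T ⁻¹' A)) := by rw [preimage_inter, hTT.preimage A]
    _ = ν (P ∩ T ⁻¹' A) := hT.measure_preimage (hPm.inter (hT.measurable hA)).nullMeasurableSet

theorem measure_polarizeSet (hT : MeasurePreserving T ν ν) (hTT : Function.Involutive T)
    (hPm : MeasurableSet P) (hP : T ⁻¹' P =ᵐ[ν] Pᶜ) (hS : MeasurableSet S) :
    ν (polarizeSet T P S) = ν S := by
  have hTS : MeasurableSet (T ⁻¹' S) := hT.measurable hS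
  have hswap {A : Set α} (hA : MeasurableSet A) :=
    measure_compl_inter_eq_measure_inter_preimage hT hTT hPm hP hA
  calc ν (polarizeSet T P S)
      = ν (P ∩ (S ∪ T ⁻¹' S)) + ν (Pᶜ ∩ (S ∩ T ⁻¹' S)) :=
        measure_union (disjoint_compl_right.mono inter_subset_left inter_subset_left)
          (hPm.compl.inter (hS.inter hTS))
    _ = ν (P ∩ S ∪ P ∩ T ⁻¹' S) + ν (P ∩ S ∩ (P ∩ T ⁻¹' S)) := by
        rw [hswap (hS.inter hTS), preimage_inter, hTT.preimage S, inter_union_distrib_left,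
          inter_inter_distrib_left, inter_comm (P ∩ T ⁻¹' S)]
    _ = ν (P ∩ S) + ν (Pᶜ ∩ S) := by
        rw [measure_union_add_inter _ (hPm.inter hTS), hswap hS]
    _ = ν S := by rw [inter_comm, inter_comm Pᶜ, ← sdiff_eq, measure_inter_add_sdiff _ hPm]

end PolarizeSet

theorem lintegral_ofReal_rpow_eq_of_measure_lt_eq {α : Type*} [MeasurableSpace α]
    {ν : Measure α} {f g : α → ℝ} (hf : 0 ≤ f) (hg : 0 ≤ g) (hfm : AEMeasurable f ν)
    (hgm : AEMeasurable g ν) (hfg : ∀ t, ν {z | t < f z} = ν {z | t < g z}) {s : ℝ}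
    (hs : 0 < s) :
    ∫⁻ z, ENNReal.ofReal (f z ^ s) ∂ν = ∫⁻ z, ENNReal.ofReal (g z ^ s) ∂ν := by
  have rpow_level (h : α → ℝ) (hh : 0 ≤ h) {t : ℝ} (ht : 0 < t) :
      {z | t < h z ^ s} = {z | t ^ s⁻¹ < h z} := by
    ext z
    exact (Real.rpow_inv_lt_iff_of_pos ht.le (hh z) hs).symm
  have hcont : Continuous fun x : ℝ => x ^ s := Real.continuous_rpow_const hs.le
  rw [lintegral_eq_lintegral_meas_lt ν (.of_forall fun z => Real.rpow_nonneg (hf z) s)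
      (hcont.measurable.comp_aemeasurable hfm),
    lintegral_eq_lintegral_meas_lt ν (.of_forall fun z => Real.rpow_nonneg (hg z) s)
      (hcont.measurable.comp_aemeasurable hgm)]
  refine setLIntegral_congr_fun measurableSet_Ioi fun t (ht : 0 < t) => ?_
  rw [rpow_level f hf ht, rpow_level g hg ht, hfg]

theorem addHaar_setOf_inner_eq {E : Type*} [NormedAddCommGroup E] [InnerProductSpace ℝ E]
    [MeasurableSpace E] [BorelSpace E] [FiniteDimensional ℝ E] (μ : Measure E)
    [μ.IsAddHaarMeasure] {e : E} (he : e ≠ 0) (c : ℝ) :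
    μ {y | ⟪y, e⟫ = c} = 0 := by
  set H := AffineSubspace.mk' ((c / ‖e‖ ^ 2) • e) (LinearMap.ker (innerₛₗ ℝ e))
  have hH : (H : Set E) = {y | ⟪y, e⟫ = c} := by
    ext y
    have hee : ‖e‖ ^ 2 ≠ 0 := by positivity
    simp [H, AffineSubspace.mem_mk', inner_sub_right, real_inner_smul_right, real_inner_comm e,
      div_mul_cancel₀ _ hee, sub_eq_zero]
  have hH_ne_top : H ≠ ⊤ := by
    intro h
    have he_mem : e ∈ H.direction := by rw [h, AffineSubspace.direction_top]; trivial
    rw [AffineSubspace.direction_mk', LinearMap.mem_ker, innerₛₗ_apply_apply] at he_mem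
    exact he (inner_self_eq_zero.mp he_mem)
  rw [← hH, Measure.addHaar_affineSubspace μ H hH_ne_top]

section Reflection

variable {n : ℕ} {e : EuclideanSpace ℝ (Fin n)} {c : ℝ}

lemma inner_reflectHyp (he : ‖e‖ = 1) (y : EuclideanSpace ℝ (Fin n)) :
    ⟪reflectHyp e c y, e⟫ = 2 * c - ⟪y, e⟫ := by
  simp only [reflectHyp, inner_sub_left, real_inner_smul_left, real_inner_self_eq_norm_sq, he]
  ring

lemma reflectHyp_involutive (he : ‖e‖ = 1) : Function.Involutive (reflectHyp e c) := by
  intro y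
  rw [reflectHyp, inner_reflectHyp he, reflectHyp]
  module

lemma reflectHyp_eq_reflection_add (he : ‖e‖ = 1) (y : EuclideanSpace ℝ (Fin n)) :
    reflectHyp e c y = (ℝ ∙ e)ᗮ.reflection y + (2 * c) • e := by
  rw [Submodule.reflection_orthogonal_apply, Submodule.reflection_singleton_apply, he,
    reflectHyp, real_inner_comm]
  module

lemma continuous_reflectHyp : Continuous (reflectHyp e c) := by
  unfold reflectHyp
  fun_prop

lemma measurePreserving_reflectHyp (he : ‖e‖ = 1) :
    MeasurePreserving (reflectHyp e c) volume volume := by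
  have h : reflectHyp e c = (· + (2 * c) • e) ∘ (ℝ ∙ e)ᗮ.reflection :=
    funext (reflectHyp_eq_reflection_add he)
  rw [h]
  exact (measurePreserving_add_right volume _).comp (LinearIsometryEquiv.measurePreserving _)

lemma preimage_reflectHyp_halfspace_ae_eq (he : ‖e‖ = 1) :
    reflectHyp e c ⁻¹' {y | c < ⟪y, e⟫} =ᵐ[volume] {y | c < ⟪y, e⟫}ᶜ := by
  have hnull := addHaar_setOf_inner_eq volume (e := e) (by rintro rfl; simp at he) c
  refine Filter.eventuallyEq_set.mpr ?_
  filter_upwards [measure_eq_zero_iff_ae_notMem.mp hnull] with y (hy : ⟪y, e⟫ ≠ c)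
  show c < ⟪reflectHyp e c y, e⟫ ↔ ¬c < ⟪y, e⟫
  rw [inner_reflectHyp he, not_lt]
  exact ⟨fun h => by linarith, fun h => by linarith [lt_of_le_of_ne h hy]⟩

end Reflection

section Polarization

variable {M : Type*} {n : ℕ} {e : EuclideanSpace ℝ (Fin n)} {c : ℝ}
  {u : M × EuclideanSpace ℝ (Fin n) → ℝ}

lemma polarize_nonneg (hu : ∀ z, 0 ≤ u z) (z : M × EuclideanSpace ℝ (Fin n)) :
    0 ≤ polarize e c u z := by
  unfold polarize
  split_ifs
  exacts [le_max_of_le_left (hu z), le_min (hu z) (hu _)]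

lemma setOf_lt_polarize (t : ℝ) :
    {z | t < polarize e c u z} =
      polarizeSet (Prod.map id (reflectHyp e c)) {z | c < ⟪z.2, e⟫} {z | t < u z} := by
  ext ⟨x, y⟩
  by_cases hy : c < ⟪y, e⟫ <;>
    simp [polarize, polarizeSet, hy]

variable [MeasurableSpace M]

lemma measurable_polarize (hu : Measurable u) : Measurable (polarize e c u) := by
  have hrefl : Measurable (u ∘ Prod.map id (reflectHyp e c)) :=
    hu.comp (measurable_id.prodMap continuous_reflectHyp.measurable)
  exact Measurable.ite (measurableSet_lt measurable_const (by fun_prop))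
    (hu.max hrefl) (hu.min hrefl)

theorem measure_setOf_lt_polarize (μ : Measure M) [SFinite μ] (he : ‖e‖ = 1)
    (hu : Measurable u) (t : ℝ) :
    μ.prod volume {z | t < polarize e c u z} = μ.prod volume {z | t < u z} := by
  have hT : MeasurePreserving (Prod.map id (reflectHyp e c)) (μ.prod volume) (μ.prod volume) :=
    (MeasurePreserving.id μ).prod (measurePreserving_reflectHyp he)
  rw [setOf_lt_polarize]
  refine measure_polarizeSet hT (Function.Involutive.prodMap (fun _ => rfl)
    (reflectHyp_involutive he)) (measurableSet_lt measurable_const (by fun_prop)) ?_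
    (measurableSet_lt measurable_const hu)
  exact Measure.quasiMeasurePreserving_snd.preimage_ae_eq
    (preimage_reflectHyp_halfspace_ae_eq he)

end Polarization

theorem stmt_0_general {M : Type*} [MeasurableSpace M] (μ : Measure M) [SigmaFinite μ]
    {n : ℕ}
    (e : EuclideanSpace ℝ (Fin n)) (he : ‖e‖ = 1) (c : ℝ)
    (u : M × EuclideanSpace ℝ (Fin n) → ℝ)
    (hmeas : Measurable u) (hpos : ∀ z, 0 ≤ u z) :
    Measurable (polarize e c u) ∧
    (∀ t : ℝ, 0 ≤ t →
      (μ.prod volume) {z | t < polarize e c u z} = (μ.prod volume) {z | t < u z}) ∧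
    (∀ s : ℝ, 1 ≤ s →
      ∫⁻ z, ENNReal.ofReal (polarize e c u z ^ s) ∂(μ.prod volume) =
        ∫⁻ z, ENNReal.ofReal (u z ^ s) ∂(μ.prod volume)) :=
  ⟨measurable_polarize hmeas, fun t _ => measure_setOf_lt_polarize μ he hmeas t,
    fun _ hs => lintegral_ofReal_rpow_eq_of_measure_lt_eq (polarize_nonneg hpos) hpos
      (measurable_polarize hmeas).aemeasurable hmeas.aemeasurable
      (measure_setOf_lt_polarize μ he hmeas) (by linarith)⟩

/-- the polarization of a nonnegative measurable function is measurable and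
equimeasurable with the original function, hence has the same `L^s`-integrals. -/
theorem stmt_0 {M : Type*} [MeasurableSpace M] (μ : Measure M) [SigmaFinite μ]
    {n : ℕ} (hn : 1 ≤ n)
    (e : EuclideanSpace ℝ (Fin n)) (he : ‖e‖ = 1) (c : ℝ)
    (u : M × EuclideanSpace ℝ (Fin n) → ℝ)
    (hmeas : Measurable u) (hpos : ∀ z, 0 ≤ u z) :
    Measurable (polarize e c u) ∧
    (∀ t : ℝ, 0 ≤ t →
      (μ.prod volume) {z | t < polarize e c u z} = (μ.prod volume) {z | t < u z}) ∧
    (∀ s : ℝ, 1 ≤ s →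
      ∫⁻ z, ENNReal.ofReal (polarize e c u z ^ s) ∂(μ.prod volume) =
        ∫⁻ z, ENNReal.ofReal (u z ^ s) ∂(μ.prod volume)) :=
  stmt_0_general μ e he c u hmeas hpos

end
end

section
/- Let (M, μ) be a σ-finite measure space and n ≥ 1. For all measurable sets A ⊆ B ⊆ M × ℝⁿ, the Steiner symmetrizations satisfy (μ ⊗ vol)(B* \ A*) ≤ (μ ⊗ vol)(B \ A). -/
/-!
Slice by slice: if `a` and `b` are the measures of the slices of `A` and `B` over `x`, the slice
of `B* \ A*` is `{y | vol (ball 0 ‖y‖) < b} \ {y | vol (ball 0 ‖y‖) < a}`. In positive dimension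
`{y | vol (ball 0 ‖y‖) < r}` has volume exactly `r` (it is a centred ball), so this slice has
volume at most `b - a`, which is at most the volume of the slice of `B \ A`. Integrating over `M`
gives the inequality.
-/

open MeasureTheory Metric
open scoped RealInnerProductSpace ENNReal

noncomputable section

/-- Steiner symmetrization (with respect to `M`) of a subset of `M × ℝⁿ`:
each slice over `x ∈ M` is replaced by the open ball centered at `0` with the same
Lebesgue measure as the slice `U_x`. -/
def steinerSet {M : Type*} {n : ℕ} (U : Set (M × EuclideanSpace ℝ (Fin n))) :
    Set (M × EuclideanSpace ℝ (Fin n)) :=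
  {z | volume (ball (0 : EuclideanSpace ℝ (Fin n)) ‖z.2‖) < volume {y' | (z.1, y') ∈ U}}

/-- Steiner symmetrization (with respect to `M`) of a function `u : M × ℝⁿ → ℝ`:
`u*(x, y) = sup ({0} ∪ {c > 0 : vol (ball 0 ‖y‖) < vol {y' : u (x, y') > c}})`. -/
def steiner {M : Type*} {n : ℕ} (u : M × EuclideanSpace ℝ (Fin n) → ℝ)
    (z : M × EuclideanSpace ℝ (Fin n)) : ℝ :=
  sSup ({0} ∪ {c : ℝ | 0 < c ∧
    volume (ball (0 : EuclideanSpace ℝ (Fin n)) ‖z.2‖) < volume {y' | c < u (z.1, y')}})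

lemma measurable_measure_ball_norm {E : Type*} [SeminormedAddCommGroup E] [MeasurableSpace E]
    [OpensMeasurableSpace E] (μ : Measure E) :
    Measurable fun y : E ↦ μ (ball 0 ‖y‖) :=
  have hmono : Monotone fun r ↦ μ (ball (0 : E) r) := fun _ _ hrs ↦
    measure_mono (ball_subset_ball hrs)
  hmono.measurable.comp continuous_norm.measurable

lemma measure_setOf_lt_sdiff_le {α : Type*} [MeasurableSpace α] {μ : Measure α}
    {f : α → ℝ≥0∞} (hf : Measurable f) (hμf : ∀ r, μ {x | f x < r} = r) (a b : ℝ≥0∞) :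
    μ ({x | f x < b} \ {x | f x < a}) ≤ b - a := by
  rcases le_or_gt b a with hba | hab
  · have hempty : {x | f x < b} \ {x | f x < a} = ∅ :=
      Set.sdiff_eq_empty.mpr fun _ hx ↦ lt_of_lt_of_le hx hba
    simp [hempty]
  · have hsub : {x | f x < a} ⊆ {x | f x < b} := fun _ hx ↦ lt_trans hx hab
    rw [measure_sdiff hsub (hf measurableSet_Iio).nullMeasurableSet (by rw [hμf]; exact hab.ne_top),
      hμf, hμf]

section AddHaar

variable {E : Type*} [NormedAddCommGroup E] [NormedSpace ℝ E] [MeasurableSpace E] [BorelSpace E]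
  [FiniteDimensional ℝ E] [Nontrivial E] (μ : Measure E) [μ.IsAddHaarMeasure]

lemma measure_ball_zero_lt_measure_ball_zero_iff {r s : ℝ} (hr : 0 ≤ r) (hs : 0 ≤ s) :
    μ (ball 0 r) < μ (ball 0 s) ↔ r < s := by
  rw [Measure.addHaar_ball μ _ hr, Measure.addHaar_ball μ _ hs,
    ENNReal.mul_lt_mul_iff_left (measure_ball_pos μ _ one_pos).ne' measure_ball_lt_top.ne,
    ENNReal.ofReal_lt_ofReal_iff_of_nonneg (by positivity),
    pow_lt_pow_iff_left₀ hr hs Module.finrank_pos.ne']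

lemma exists_measure_ball_zero_eq {r : ℝ≥0∞} (hr : r ≠ ∞) :
    ∃ s : ℝ, 0 ≤ s ∧ μ (ball 0 s) = r := by
  set c := μ (ball (0 : E) 1)
  have hc : c ≠ 0 := (measure_ball_pos μ _ one_pos).ne'
  have hc' : c ≠ ∞ := measure_ball_lt_top.ne
  have hd : (Module.finrank ℝ E : ℝ) ≠ 0 := Nat.cast_ne_zero.mpr Module.finrank_pos.ne'
  have hq : 0 ≤ r.toReal / c.toReal := by positivity
  -- the volume of `ball 0 s` is `s ^ finrank ℝ E * c`, so solve for `s`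
  refine ⟨(r.toReal / c.toReal) ^ (Module.finrank ℝ E : ℝ)⁻¹, by positivity, ?_⟩
  rw [Measure.addHaar_ball μ _ (by positivity), ← Real.rpow_natCast, ← Real.rpow_mul hq,
    inv_mul_cancel₀ hd, Real.rpow_one, ENNReal.ofReal_div_of_pos (ENNReal.toReal_pos hc hc'),
    ENNReal.ofReal_toReal hr, ENNReal.ofReal_toReal hc', ENNReal.div_mul_cancel hc hc']

lemma measure_setOf_measure_ball_norm_lt (r : ℝ≥0∞) :
    μ {y : E | μ (ball 0 ‖y‖) < r} = r := by
  rcases eq_or_ne r ∞ with rfl | hr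
  · simp only [measure_ball_lt_top, Set.ofPred_true]
    exact measure_univ_of_isAddLeftInvariant μ
  · obtain ⟨s, hs, rfl⟩ := exists_measure_ball_zero_eq μ hr
    have hball : {y : E | μ (ball 0 ‖y‖) < μ (ball 0 s)} = ball 0 s := by
      ext y
      simp [measure_ball_zero_lt_measure_ball_zero_iff μ (norm_nonneg y) hs]
    rw [hball]

end AddHaar

lemma measurableSet_steinerSet {M : Type*} [MeasurableSpace M] {n : ℕ}
    {U : Set (M × EuclideanSpace ℝ (Fin n))} (hU : MeasurableSet U) :
    MeasurableSet (steinerSet U) :=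
  measurableSet_lt ((measurable_measure_ball_norm volume).comp measurable_snd)
    ((measurable_measure_prodMk_left hU).comp measurable_fst)

theorem stmt_4_general {M : Type*} [MeasurableSpace M] (μ : Measure M)
    {n : ℕ} (hn : 1 ≤ n)
    (A B : Set (M × EuclideanSpace ℝ (Fin n)))
    (hA : MeasurableSet A) (hB : MeasurableSet B) :
    (μ.prod volume) (steinerSet B \ steinerSet A) ≤ (μ.prod volume) (B \ A) := by
  -- writing `n = m + 1` provides the `Nontrivial` instance on `EuclideanSpace ℝ (Fin n)`
  obtain ⟨m, rfl⟩ := Nat.exists_eq_add_of_le' hn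
  rw [Measure.prod_apply ((measurableSet_steinerSet hB).diff (measurableSet_steinerSet hA)),
    Measure.prod_apply (hB.diff hA)]
  refine lintegral_mono fun x ↦ ?_
  calc volume (Prod.mk x ⁻¹' (steinerSet B \ steinerSet A))
      ≤ volume (Prod.mk x ⁻¹' B) - volume (Prod.mk x ⁻¹' A) :=
        measure_setOf_lt_sdiff_le (measurable_measure_ball_norm volume)
          (measure_setOf_measure_ball_norm_lt volume) _ _
    _ ≤ volume (Prod.mk x ⁻¹' B \ Prod.mk x ⁻¹' A) := le_measure_sdiff

/-- Steiner symmetrization does not increase the measure of set differences. -/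
theorem stmt_4 {M : Type*} [MeasurableSpace M] (μ : Measure M) [SigmaFinite μ]
    {n : ℕ} (hn : 1 ≤ n)
    (A B : Set (M × EuclideanSpace ℝ (Fin n)))
    (hA : MeasurableSet A) (hB : MeasurableSet B) (hAB : A ⊆ B) :
    (μ.prod volume) (steinerSet B \ steinerSet A) ≤ (μ.prod volume) (B \ A) :=
  stmt_4_general μ hn A B hA hB

end
end

section
/- Let (M, d_M) be a metric space and n ≥ 1; equip M × ℝⁿ with the product metric dist((x, y), (x', y')) = max(d_M(x, x'), ‖y − y'‖). Let ω : [0, ∞) → [0, ∞) be nondecreasing and let u : M × ℝⁿ → ℝ satisfy |u(z) − u(z')| ≤ ω(dist(z, z')) for all z, z' ∈ M × ℝⁿ. Then for every polarizer H ⊆ ℝⁿ, the polarization u^H satisfies |u^H(z) − u^H(z')| ≤ ω(dist(z, z')) for all z, z'. In particular, if u is L-Lipschitz then u^H is L-Lipschitz. -/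
open MeasureTheory Metric
open scoped RealInnerProductSpace ENNReal

noncomputable section

lemma reflect_key {n : ℕ} {e : EuclideanSpace ℝ (Fin n)} (he : ‖e‖ = 1) (c : ℝ)
    (y y' : EuclideanSpace ℝ (Fin n)) :
    ‖y - reflectHyp e c y'‖^2 = ‖y - y'‖^2 + 4 * (⟪y,e⟫ - c) * (⟪y',e⟫ - c) := by
  have h : y - reflectHyp e c y' = (y - y') + (2*(⟪y',e⟫-c)) • e := by
    simp only [reflectHyp]; abel
  rw [h, norm_add_sq_real, real_inner_smul_right, inner_sub_left, norm_smul, mul_pow,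
    he, Real.norm_eq_abs, sq_abs]
  ring

lemma reflect_isom {n : ℕ} {e : EuclideanSpace ℝ (Fin n)} (he : ‖e‖ = 1) (c : ℝ)
    (y y' : EuclideanSpace ℝ (Fin n)) :
    dist (reflectHyp e c y) (reflectHyp e c y') = dist y y' := by
  have h : reflectHyp e c y - reflectHyp e c y'
      = (y - y') - (2 * ⟪y - y', e⟫) • e := by
    simp only [reflectHyp, inner_sub_left]
    rw [show (2 * (⟪y,e⟫ - ⟪y',e⟫)) • e = (2*(⟪y,e⟫-c)) • e - (2*(⟪y',e⟫-c)) • e by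
      rw [← sub_smul]; ring_nf]
    abel
  have h2 : ‖reflectHyp e c y - reflectHyp e c y'‖^2 = ‖y - y'‖^2 := by
    rw [h, norm_sub_sq_real, real_inner_smul_right, norm_smul, mul_pow, he,
      Real.norm_eq_abs, sq_abs]
    ring
  rw [dist_eq_norm, dist_eq_norm]
  nlinarith [norm_nonneg (reflectHyp e c y - reflectHyp e c y'), norm_nonneg (y - y')]

lemma reflect_cross {n : ℕ} {e : EuclideanSpace ℝ (Fin n)} (he : ‖e‖ = 1) {c : ℝ}
    {y y' : EuclideanSpace ℝ (Fin n)} (h : (⟪y,e⟫ - c) * (⟪y',e⟫ - c) ≤ 0) :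
    dist y (reflectHyp e c y') ≤ dist y y' := by
  have h2 := reflect_key he c y y'
  rw [dist_eq_norm, dist_eq_norm]
  nlinarith [norm_nonneg (y - reflectHyp e c y'), norm_nonneg (y - y')]

lemma mixed_est {M : Type*} [MetricSpace M] {n : ℕ}
    (ω : ℝ → ℝ) (hω : MonotoneOn ω (Set.Ici 0))
    (u : M × EuclideanSpace ℝ (Fin n) → ℝ)
    (hu : ∀ z z', |u z - u z'| ≤ ω (dist z z'))
    {e : EuclideanSpace ℝ (Fin n)} (he : ‖e‖ = 1) {c : ℝ}
    (x x' : M) {y y' : EuclideanSpace ℝ (Fin n)}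
    (h1 : c ≤ ⟪y, e⟫) (h2 : ⟪y', e⟫ ≤ c) :
    |max (u (x,y)) (u (x, reflectHyp e c y)) -
      min (u (x',y')) (u (x', reflectHyp e c y'))|
      ≤ ω (dist ((x,y) : M × EuclideanSpace ℝ (Fin n)) (x',y')) := by
  set d : ℝ := dist ((x, y) : M × EuclideanSpace ℝ (Fin n)) (x', y') with hd
  have hdeq : d = max (dist x x') (dist y y') := by rw [hd, Prod.dist_eq]
  have hmono : ∀ (p q : M × EuclideanSpace ℝ (Fin n)), dist p q ≤ d →
      |u p - u q| ≤ ω d := fun p q hpq =>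
    le_trans (hu p q) (hω dist_nonneg (le_trans dist_nonneg hpq) hpq)
  have haa : |u (x,y) - u (x',y')| ≤ ω d := hmono _ _ le_rfl
  have hbb : |u (x, reflectHyp e c y) - u (x', reflectHyp e c y')| ≤ ω d := by
    apply hmono
    simp only [Prod.dist_eq, reflect_isom he, hdeq]; rfl
  have hA : |u (x,y) - u (x', reflectHyp e c y')| ≤ ω d := by
    apply hmono
    simp only [Prod.dist_eq, hdeq]
    exact max_le_max le_rfl
      (reflect_cross he (mul_nonpos_of_nonneg_of_nonpos (by linarith) (by linarith)))
  have hB : |u (x, reflectHyp e c y) - u (x',y')| ≤ ω d := by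
    apply hmono
    simp only [Prod.dist_eq, hdeq]
    apply max_le_max le_rfl
    rw [dist_comm (reflectHyp e c y) y', dist_comm y y']
    exact reflect_cross he (mul_nonpos_of_nonpos_of_nonneg (by linarith) (by linarith))
  rcases max_cases (u (x,y)) (u (x, reflectHyp e c y)) with ⟨hm, _⟩ | ⟨hm, _⟩ <;>
    rcases min_cases (u (x',y')) (u (x', reflectHyp e c y')) with ⟨hm', _⟩ | ⟨hm', _⟩ <;>
    rw [hm, hm']
  · exact haa
  · exact hA
  · exact hB
  · exact hbb

lemma main_est {M : Type*} [MetricSpace M] {n : ℕ}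
    (ω : ℝ → ℝ) (hω : MonotoneOn ω (Set.Ici 0))
    (u : M × EuclideanSpace ℝ (Fin n) → ℝ)
    (hu : ∀ z z', |u z - u z'| ≤ ω (dist z z'))
    {e : EuclideanSpace ℝ (Fin n)} (he : ‖e‖ = 1) (c : ℝ) :
    ∀ z z', |polarize e c u z - polarize e c u z'| ≤ ω (dist z z') := by
  intro z z'
  obtain ⟨x, y⟩ := z
  obtain ⟨x', y'⟩ := z'
  set d : ℝ := dist ((x, y) : M × EuclideanSpace ℝ (Fin n)) (x', y') with hd
  have hdeq : d = max (dist x x') (dist y y') := by rw [hd, Prod.dist_eq]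
  have haa : |u (x,y) - u (x',y')| ≤ ω d := hu _ _
  have hbb : |u (x, reflectHyp e c y) - u (x', reflectHyp e c y')| ≤ ω d := by
    have := hu (x, reflectHyp e c y) (x', reflectHyp e c y')
    rwa [Prod.dist_eq, reflect_isom he, ← hdeq] at this
  simp only [polarize]
  by_cases h1 : c < ⟪y, e⟫ <;> by_cases h2 : c < ⟪y', e⟫ <;>
    simp only [h1, h2, if_true, if_false]
  · calc |max (u (x,y)) (u (x, reflectHyp e c y)) -
        max (u (x',y')) (u (x', reflectHyp e c y'))| ≤ _ := abs_max_sub_max_le_max _ _ _ _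
      _ ≤ ω d := max_le haa hbb
  · exact mixed_est ω hω u hu he x x' h1.le (not_lt.mp h2)
  · rw [abs_sub_comm, hd, dist_comm]
    exact mixed_est ω hω u hu he x' x h2.le (not_lt.mp h1)
  · calc |min (u (x,y)) (u (x, reflectHyp e c y)) -
        min (u (x',y')) (u (x', reflectHyp e c y'))| ≤ _ := abs_min_sub_min_le_max _ _ _ _
      _ ≤ ω d := max_le haa hbb

/-- polarization preserves any modulus of continuity (for the sup product
metric on `M × ℝⁿ`); in particular it preserves Lipschitz constants. -/
theorem stmt_9 {M : Type*} [MetricSpace M] {n : ℕ} (hn : 1 ≤ n)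
    (ω : ℝ → ℝ) (hω : MonotoneOn ω (Set.Ici 0)) (hω0 : ∀ t, 0 ≤ t → 0 ≤ ω t)
    (u : M × EuclideanSpace ℝ (Fin n) → ℝ)
    (hu : ∀ z z', |u z - u z'| ≤ ω (dist z z'))
    (e : EuclideanSpace ℝ (Fin n)) (he : ‖e‖ = 1) (c : ℝ) :
    (∀ z z', |polarize e c u z - polarize e c u z'| ≤ ω (dist z z')) ∧
    (∀ (L : NNReal) (v : M × EuclideanSpace ℝ (Fin n) → ℝ),
      LipschitzWith L v → LipschitzWith L (polarize e c v)) := by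
  constructor
  · exact main_est ω hω u hu he c
  · intro L v hv
    have hv' : ∀ z z', |v z - v z'| ≤ (fun t => (L : ℝ) * t) (dist z z') := by
      intro z z'
      have := hv.dist_le_mul z z'
      rwa [Real.dist_eq] at this
    have hmon : MonotoneOn (fun t => (L : ℝ) * t) (Set.Ici 0) :=
      fun a _ b _ hab => mul_le_mul_of_nonneg_left hab L.coe_nonneg
    have := main_est (fun t => (L : ℝ) * t) hmon v hv' he c
    apply LipschitzWith.of_dist_le_mul
    intro z z'
    rw [Real.dist_eq]
    exact this z z'
end
end

section
/- Let (M, d_M) be a compact metric space equipped with a finite Borel measure μ, let n ≥ 1, and let u : M × ℝⁿ → [0, ∞) be continuous with compact support. Let (H_i) be a sequence of polarizers in the class H₀, and define the iterated polarizations u_0 = u, u_{m+1} = (u_m)^{H_{m+1}}. Then there exist a continuous, nonnegative, compactly supported function f : M × ℝⁿ → [0, ∞) and a strictly increasing sequence of indices (m_k) such that u_{m_k} converges to f uniformly on M × ℝⁿ; in particular ∫ |f − u_{m_k}|^s d(μ ⊗ vol) → 0 for every 1 ≤ s < ∞, and sup |f − u_{m_k}| → 0. -/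
open MeasureTheory Metric
open scoped RealInnerProductSpace ENNReal

noncomputable section

/-- Iterated polarizations: `u_0 = u`, `u_{m+1} = (u_m)^{H_{m+1}}`, where the polarizer
`H_{m+1}` is determined by the unit vector `e m` and the constant `cs m`. -/
def iterPolarize {M : Type*} {n : ℕ} (e : ℕ → EuclideanSpace ℝ (Fin n)) (cs : ℕ → ℝ)
    (u : M × EuclideanSpace ℝ (Fin n) → ℝ) :
    ℕ → (M × EuclideanSpace ℝ (Fin n) → ℝ)
  | 0 => u
  | m + 1 => polarize (e m) (cs m) (iterPolarize e cs u m)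

/-!
Polarization only redistributes the values of `u` between mirror points, so every iterate takes
values in the range of `u`. The reflection is an isometry and, for points on opposite sides of the
hyperplane, brings the reflected point closer; hence any modulus of continuity of `u` is one of
every iterate. Since the origin lies in the polarizer, reflection moves points of `H` away from it,
so the iterates vanish outside a fixed ball. Arzelà–Ascoli on the compact set `M × ball` then
yields a uniformly convergent subsequence, and uniform convergence with supports in a set of finite
measure gives convergence in every `Lˢ`.
-/

section

open Filter Topology

section Reflection

variable {n : ℕ} {e : EuclideanSpace ℝ (Fin n)} {c : ℝ}

lemma inner_reflectHyp_sub (he : ‖e‖ = 1) (y : EuclideanSpace ℝ (Fin n)) :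
    ⟪reflectHyp e c y, e⟫ - c = -(⟪y, e⟫ - c) := by
  rw [reflectHyp, inner_sub_left, real_inner_smul_left, real_inner_self_eq_norm_sq, he]
  ring

lemma norm_reflectHyp_sub_sq (he : ‖e‖ = 1) (y y' : EuclideanSpace ℝ (Fin n)) :
    ‖reflectHyp e c y - y'‖ ^ 2 =
      ‖y - y'‖ ^ 2 + 4 * (⟪y, e⟫ - c) * (⟪y', e⟫ - c) := by
  have h : reflectHyp e c y - y' = (y - y') - (2 * (⟪y, e⟫ - c)) • e := by
    rw [reflectHyp]; abel
  rw [h, norm_sub_sq_real, real_inner_smul_right, norm_smul, he, inner_sub_left,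
    Real.norm_eq_abs, mul_one, sq_abs]
  ring

lemma dist_reflectHyp_reflectHyp (he : ‖e‖ = 1) (y y' : EuclideanSpace ℝ (Fin n)) :
    dist (reflectHyp e c y) (reflectHyp e c y') = dist y y' := by
  have h1 := norm_reflectHyp_sub_sq (c := c) he y (reflectHyp e c y')
  have h2 := norm_reflectHyp_sub_sq (c := c) he y' y
  rw [inner_reflectHyp_sub he, norm_sub_rev y] at h1
  rw [dist_eq_norm, dist_eq_norm, ← sq_eq_sq₀ (norm_nonneg _) (norm_nonneg _), norm_sub_rev y]
  linear_combination h1 + h2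

lemma dist_reflectHyp_le (he : ‖e‖ = 1) {y y' : EuclideanSpace ℝ (Fin n)}
    (h : (⟪y, e⟫ - c) * (⟪y', e⟫ - c) ≤ 0) :
    dist (reflectHyp e c y) y' ≤ dist y y' := by
  rw [dist_eq_norm, dist_eq_norm, ← sq_le_sq₀ (norm_nonneg _) (norm_nonneg _),
    norm_reflectHyp_sub_sq he]
  linarith

lemma norm_le_norm_reflectHyp (he : ‖e‖ = 1) (hc : c ≤ 0) {y : EuclideanSpace ℝ (Fin n)}
    (hy : c ≤ ⟪y, e⟫) : ‖y‖ ≤ ‖reflectHyp e c y‖ := by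
  have h := norm_reflectHyp_sub_sq (c := c) he y 0
  rw [sub_zero, sub_zero, inner_zero_left] at h
  rw [← sq_le_sq₀ (norm_nonneg _) (norm_nonneg _), h]
  nlinarith

end Reflection

section Polarization

variable {M : Type*} {n : ℕ} {e : EuclideanSpace ℝ (Fin n)} {c : ℝ}

lemma polarize_mem_range (v : M × EuclideanSpace ℝ (Fin n) → ℝ)
    (z : M × EuclideanSpace ℝ (Fin n)) : polarize e c v z ∈ Set.range v := by
  unfold polarize
  split_ifs
  · rcases max_choice (v z) (v (z.1, reflectHyp e c z.2)) with h | h <;> rw [h] <;> simp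
  · rcases min_choice (v z) (v (z.1, reflectHyp e c z.2)) with h | h <;> rw [h] <;> simp

lemma polarize_eq_zero_of_lt_norm (he : ‖e‖ = 1) (hc : c ≤ 0)
    {v : M × EuclideanSpace ℝ (Fin n) → ℝ} (hv0 : ∀ z, 0 ≤ v z) {R : ℝ}
    (hv : ∀ z, R < ‖z.2‖ → v z = 0)
    {z : M × EuclideanSpace ℝ (Fin n)} (hz : R < ‖z.2‖) : polarize e c v z = 0 := by
  unfold polarize
  split_ifs with hH
  · have hσ : R < ‖(z.1, reflectHyp e c z.2).2‖ :=
      hz.trans_le (norm_le_norm_reflectHyp he hc hH.le)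
    rw [hv z hz, hv _ hσ, max_self]
  · rw [hv z hz]
    exact min_eq_left (hv0 _)

lemma exists_dist_polarize_le [PseudoMetricSpace M] (he : ‖e‖ = 1)
    (v : M × EuclideanSpace ℝ (Fin n) → ℝ) (z z' : M × EuclideanSpace ℝ (Fin n)) :
    ∃ w w', dist w w' ≤ dist z z' ∧
      dist (polarize e c v z) (polarize e c v z') ≤ dist (v w) (v w') := by
  wlog hside : c < ⟪z.2, e⟫ ∨ ⟪z'.2, e⟫ ≤ c generalizing z z'
  · obtain ⟨w, w', hd, hv⟩ := this z' z (Or.inl (not_le.1 (not_or.1 hside).2))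
    exact ⟨w', w, by rwa [dist_comm, dist_comm z], by rwa [dist_comm, dist_comm (v w')]⟩
  set σz : M × EuclideanSpace ℝ (Fin n) := (z.1, reflectHyp e c z.2)
  set σz' : M × EuclideanSpace ℝ (Fin n) := (z'.1, reflectHyp e c z'.2)
  have hσσ : dist σz σz' = dist z z' := by
    simp only [σz, σz', Prod.dist_eq, dist_reflectHyp_reflectHyp he]
  have same_side : ∀ {p q : ℝ}, dist p q ≤ max (dist (v z) (v z')) (dist (v σz) (v σz')) →
      ∃ w w', dist w w' ≤ dist z z' ∧ dist p q ≤ dist (v w) (v w') := by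
    intro p q h
    rcases max_choice (dist (v z) (v z')) (dist (v σz) (v σz')) with hm | hm <;> rw [hm] at h
    exacts [⟨z, z', le_rfl, h⟩, ⟨σz, σz', hσσ.le, h⟩]
  unfold polarize
  split_ifs with hz hz' hz'
  · apply same_side
    simpa only [Real.dist_eq] using abs_max_sub_max_le_max (v z) (v σz) (v z') (v σz')
  · have hcross : (⟪z.2, e⟫ - c) * (⟪z'.2, e⟫ - c) ≤ 0 :=
      mul_nonpos_of_nonneg_of_nonpos (by linarith) (by linarith)
    have hσz : dist σz z' ≤ dist z z' := by
      simp only [σz, Prod.dist_eq]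
      exact max_le_max le_rfl (dist_reflectHyp_le he hcross)
    have hσz' : dist z σz' ≤ dist z z' := by
      simp only [σz', Prod.dist_eq, dist_comm z.2, dist_comm z.1]
      exact max_le_max le_rfl (dist_reflectHyp_le he (by rwa [mul_comm]))
    rcases max_choice (v z) (v σz) with h₁ | h₁ <;>
      rcases min_choice (v z') (v σz') with h₂ | h₂ <;> rw [h₁, h₂]
    exacts [⟨z, z', le_rfl, le_rfl⟩, ⟨z, σz', hσz', le_rfl⟩, ⟨σz, z', hσz, le_rfl⟩,
      ⟨σz, σz', hσσ.le, le_rfl⟩]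
  · exact ((hside.resolve_left hz).not_gt hz').elim
  · apply same_side
    simpa only [Real.dist_eq] using abs_min_sub_min_le_max (v z) (v σz) (v z') (v σz')

end Polarization

section IteratedPolarization

variable {M : Type*} {n : ℕ} {e : ℕ → EuclideanSpace ℝ (Fin n)} {cs : ℕ → ℝ}
  {u : M × EuclideanSpace ℝ (Fin n) → ℝ}

lemma iterPolarize_mem_range (m : ℕ) (z : M × EuclideanSpace ℝ (Fin n)) :
    iterPolarize e cs u m z ∈ Set.range u := by
  induction m generalizing z with
  | zero => exact Set.mem_range_self z
  | succ m ih =>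
    obtain ⟨w, hw⟩ := polarize_mem_range (e := e m) (c := cs m) (iterPolarize e cs u m) z
    rw [iterPolarize, ← hw]
    exact ih w

lemma iterPolarize_nonneg (hu0 : ∀ z, 0 ≤ u z) (m : ℕ) (z : M × EuclideanSpace ℝ (Fin n)) :
    0 ≤ iterPolarize e cs u m z := by
  obtain ⟨w, hw⟩ := iterPolarize_mem_range (e := e) (cs := cs) m z
  exact hw ▸ hu0 w

lemma iterPolarize_eq_zero_of_lt_norm (he : ∀ i, ‖e i‖ = 1) (hcs : ∀ i, cs i ≤ 0)
    (hu0 : ∀ z, 0 ≤ u z) {R : ℝ} (hu : ∀ z, R < ‖z.2‖ → u z = 0) (m : ℕ)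
    {z : M × EuclideanSpace ℝ (Fin n)} (hz : R < ‖z.2‖) : iterPolarize e cs u m z = 0 := by
  induction m generalizing z with
  | zero => exact hu z hz
  | succ m ih =>
    exact polarize_eq_zero_of_lt_norm (he m) (hcs m) (iterPolarize_nonneg hu0 m)
      (fun _ => ih) hz

lemma uniformEquicontinuous_iterPolarize [PseudoMetricSpace M] (he : ∀ i, ‖e i‖ = 1)
    (hu : UniformContinuous u) : UniformEquicontinuous (iterPolarize e cs u) := by
  rw [Metric.uniformEquicontinuous_iff]
  intro ε hε
  obtain ⟨δ, hδ, hu⟩ := Metric.uniformContinuous_iff.1 hu ε hε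
  refine ⟨δ, hδ, fun z z' hzz' m => ?_⟩
  induction m generalizing z z' with
  | zero => exact hu hzz'
  | succ m ih =>
    obtain ⟨w, w', hd, hv⟩ :=
      exists_dist_polarize_le (c := cs m) (he m) (iterPolarize e cs u m) z z'
    exact hv.trans_lt (ih w w' (hd.trans_lt hzz'))

end IteratedPolarization

lemma exists_tendstoUniformly_subseq_of_equicontinuousOn {X β : Type*} [TopologicalSpace X]
    [MetricSpace β] [Zero β] {F : ℕ → X → β} {K : Set X} (hK : IsCompact K) {S : Set β}
    (hS : IsCompact S) (hFS : ∀ m, ∀ x ∈ K, F m x ∈ S) (hFK : ∀ m, ∀ x ∉ K, F m x = 0)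
    (hF : EquicontinuousOn F K) :
    ∃ (f : X → β) (φ : ℕ → ℕ),
      StrictMono φ ∧ TendstoUniformly (fun k => F (φ k)) f atTop := by
  have : CompactSpace K := isCompact_iff_compactSpace.1 hK
  have hF' : Equicontinuous (K.domRestrict ∘ F) := (equicontinuous_restrict_iff F).2 hF
  let g : ℕ → BoundedContinuousFunction K β := fun m =>
    .mkOfCompact ⟨K.domRestrict (F m), hF'.continuous m⟩
  have hg : IsCompact (closure (Set.range g)) := by
    refine BoundedContinuousFunction.arzela_ascoli S hS _ ?_ ?_
    · rintro _ x ⟨m, rfl⟩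
      exact hFS m x x.2
    · have : ((↑) : Set.range g → K → β) =
          (K.domRestrict ∘ F) ∘ fun i => i.2.choose := by
        funext i
        exact congrArg (⇑) i.2.choose_spec.symm
      rw [this]
      exact hF'.comp _
  obtain ⟨glim, -, φ, hφ, hlim⟩ :=
    hg.tendsto_subseq fun m => subset_closure (Set.mem_range_self m)
  classical
  refine ⟨fun x => if hx : x ∈ K then glim ⟨x, hx⟩ else 0, φ, hφ, ?_⟩
  rw [Metric.tendstoUniformly_iff]
  intro ε hε
  filter_upwards [Metric.tendsto_nhds.1 hlim ε hε] with k hk x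
  split_ifs with hx
  · exact (glim.dist_coe_le_dist (g := g (φ k)) ⟨x, hx⟩).trans_lt
      (by rwa [dist_comm] at hk)
  · rw [hFK _ x hx, dist_self]
    exact hε

lemma tendsto_lintegral_rpow_of_tendstoUniformly {ι X : Type*} [MeasurableSpace X]
    {ν : Measure X} {l : Filter ι} {F : ι → X → ℝ} {f : X → ℝ} {K : Set X}
    (hK : ν K ≠ ∞) (hFK : ∀ i, ∀ x ∉ K, F i x = f x) (hF : TendstoUniformly F f l)
    {s : ℝ} (hs : 0 < s) :
    Tendsto (fun i => ∫⁻ x, ENNReal.ofReal (|f x - F i x| ^ s) ∂ν) l (𝓝 0) := by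
  have hbound : Tendsto (fun δ : ℝ => ENNReal.ofReal (δ ^ s) * ν K) (𝓝[>] 0) (𝓝 0) := by
    have h : Tendsto (fun δ : ℝ => ENNReal.ofReal (δ ^ s)) (𝓝 0) (𝓝 0) := by
      simpa [Function.comp_def, Real.zero_rpow hs.ne'] using
        (ENNReal.continuous_ofReal.comp (Real.continuous_rpow_const hs.le)).tendsto 0
    simpa using (ENNReal.Tendsto.mul_const h (Or.inr hK)).mono_left nhdsWithin_le_nhds
  rw [ENNReal.tendsto_nhds_zero]
  intro ε hε
  obtain ⟨δ, hδε, hδ⟩ :=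
    ((ENNReal.tendsto_nhds_zero.1 hbound ε hε).and self_mem_nhdsWithin).exists
  filter_upwards [Metric.tendstoUniformly_iff.1 hF δ hδ] with i hi
  calc ∫⁻ x, ENNReal.ofReal (|f x - F i x| ^ s) ∂ν
      ≤ ∫⁻ x, K.indicator (fun _ => ENNReal.ofReal (δ ^ s)) x ∂ν := by
        refine lintegral_mono fun x => ?_
        by_cases hx : x ∈ K
        · rw [Set.indicator_of_mem hx, ← Real.dist_eq]
          exact ENNReal.ofReal_le_ofReal (Real.rpow_le_rpow dist_nonneg (hi x).le hs.le)
        · rw [hFK i x hx, sub_self, abs_zero, Real.zero_rpow hs.ne', ENNReal.ofReal_zero]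
          exact zero_le
    _ ≤ ENNReal.ofReal (δ ^ s) * ν K := lintegral_indicator_const_le K _
    _ ≤ ε := hδε

lemma HasCompactSupport.exists_eq_zero_of_lt_norm_snd {α E β : Type*} [TopologicalSpace α]
    [SeminormedAddCommGroup E] [Zero β] [TopologicalSpace β] {f : α × E → β}
    (hf : HasCompactSupport f) : ∃ R, ∀ z : α × E, R < ‖z.2‖ → f z = 0 := by
  obtain ⟨R, hR⟩ := (hf.image (continuous_norm.comp continuous_snd)).bddAbove
  exact ⟨R, fun z hz =>
    image_eq_zero_of_notMem_tsupport fun hz' => hz.not_ge (hR ⟨z, hz', rfl⟩)⟩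

end

theorem stmt_10_general {M : Type*} [MetricSpace M] [CompactSpace M]
    [MeasurableSpace M] (μ : Measure M) [IsFiniteMeasure μ]
    {n : ℕ}
    (u : M × EuclideanSpace ℝ (Fin n) → ℝ)
    (hcont : Continuous u) (hsupp : HasCompactSupport u) (hpos : ∀ z, 0 ≤ u z)
    (e : ℕ → EuclideanSpace ℝ (Fin n)) (cs : ℕ → ℝ)
    (he : ∀ i, ‖e i‖ = 1) (hcs : ∀ i, cs i < 0) :
    ∃ (f : M × EuclideanSpace ℝ (Fin n) → ℝ) (mk : ℕ → ℕ),
      Continuous f ∧ HasCompactSupport f ∧ (∀ z, 0 ≤ f z) ∧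
      StrictMono mk ∧
      TendstoUniformly (fun k => iterPolarize e cs u (mk k)) f Filter.atTop ∧
      (∀ s : ℝ, 1 ≤ s →
        Filter.Tendsto
          (fun k => ∫⁻ z, ENNReal.ofReal (|f z - iterPolarize e cs u (mk k) z| ^ s)
            ∂(μ.prod volume))
          Filter.atTop (nhds 0)) := by
  obtain ⟨R, hR⟩ := hsupp.exists_eq_zero_of_lt_norm_snd
  set K : Set (M × EuclideanSpace ℝ (Fin n)) := Set.univ ×ˢ closedBall 0 R
  have hK : IsCompact K := isCompact_univ.prod (isCompact_closedBall 0 R)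
  have hUK : ∀ m, ∀ z ∉ K, iterPolarize e cs u m z = 0 := fun m z hz =>
    iterPolarize_eq_zero_of_lt_norm he (fun i => (hcs i).le) hpos hR m (by simpa [K] using hz)
  have hequi : UniformEquicontinuous (iterPolarize e cs u) :=
    uniformEquicontinuous_iterPolarize he (hsupp.uniformContinuous_of_continuous hcont)
  obtain ⟨f, mk, hmk, htu⟩ := exists_tendstoUniformly_subseq_of_equicontinuousOn hK
    (hsupp.isCompact_range hcont) (fun m z _ => iterPolarize_mem_range m z) hUK
    (hequi.equicontinuous.equicontinuousOn K)
  have hfK : ∀ z ∉ K, f z = 0 := fun z hz =>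
    tendsto_nhds_unique (htu.tendsto_at z) (by simp only [hUK _ z hz]; exact tendsto_const_nhds)
  have hf0 : ∀ z, 0 ≤ f z := fun z =>
    ge_of_tendsto' (htu.tendsto_at z) fun k => iterPolarize_nonneg hpos (mk k) z
  refine ⟨f, mk, htu.continuous (.of_forall fun _ => hequi.equicontinuous.continuous _),
    .intro hK hfK, hf0, hmk, htu, fun s hs => ?_⟩
  exact tendsto_lintegral_rpow_of_tendstoUniformly hK.measure_lt_top.ne
    (fun k z hz => (hUK _ z hz).trans (hfK z hz).symm) htu (by linarith)

/-- sequential compactness of iterated polarizations of a continuous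
compactly supported function: a subsequence converges uniformly (hence in every `L^s`)
to a continuous nonnegative compactly supported function. -/
theorem stmt_10 {M : Type*} [MetricSpace M] [CompactSpace M]
    [MeasurableSpace M] [BorelSpace M] (μ : Measure M) [IsFiniteMeasure μ]
    {n : ℕ} (hn : 1 ≤ n)
    (u : M × EuclideanSpace ℝ (Fin n) → ℝ)
    (hcont : Continuous u) (hsupp : HasCompactSupport u) (hpos : ∀ z, 0 ≤ u z)
    (e : ℕ → EuclideanSpace ℝ (Fin n)) (cs : ℕ → ℝ)
    (he : ∀ i, ‖e i‖ = 1) (hcs : ∀ i, cs i < 0) :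
    ∃ (f : M × EuclideanSpace ℝ (Fin n) → ℝ) (mk : ℕ → ℕ),
      Continuous f ∧ HasCompactSupport f ∧ (∀ z, 0 ≤ f z) ∧
      StrictMono mk ∧
      TendstoUniformly (fun k => iterPolarize e cs u (mk k)) f Filter.atTop ∧
      (∀ s : ℝ, 1 ≤ s →
        Filter.Tendsto
          (fun k => ∫⁻ z, ENNReal.ofReal (|f z - iterPolarize e cs u (mk k) z| ^ s)
            ∂(μ.prod volume))
          Filter.atTop (nhds 0)) :=
  stmt_10_general μ u hcont hsupp hpos e cs he hcs

end
end

section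
/- Let (M, μ) be a σ-finite measure space and n ≥ 1. Let (ρ_k) be a sequence of measurable functions ρ_k : M × ℝⁿ → [0, ∞) such that each ρ_k equals its Steiner symmetrization with respect to M (ρ_k = ρ_k*) and ∫ ρ_k d(μ ⊗ vol) = 1 for every k. Then there exist a subsequence (ρ_{k_j}) and a real number α with 0 ≤ α ≤ 1 such that: (i) for every ε > 0 there exist R ∈ (0, ∞) and j₀ such that ∫_{M × B(0,R)} ρ_{k_j} d(μ ⊗ vol) ≥ α − ε for all j ≥ j₀; and (ii) for every R > 0 and every ε > 0 there exists j₁ such that ∫_{M × B(0,R)} ρ_{k_j} d(μ ⊗ vol) ≤ α + ε for all j ≥ j₁. -/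
open MeasureTheory Metric Filter Topology
open scoped RealInnerProductSpace ENNReal

noncomputable section

/-- concentration for symmetrized densities: a sequence of Steiner
symmetric probability densities has a subsequence whose mass inside tubes `M × B(0, R)`
converges (in the sense of (i) and (ii)) to some `α ∈ [0, 1]`. -/
theorem stmt_17 {M : Type*} [MeasurableSpace M] (μ : Measure M) [SigmaFinite μ]
    {n : ℕ} (hn : 1 ≤ n)
    (ρ : ℕ → (M × EuclideanSpace ℝ (Fin n) → ℝ))
    (hmeas : ∀ k, Measurable (ρ k)) (hpos : ∀ k z, 0 ≤ ρ k z)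
    (hsym : ∀ k, ρ k = steiner (ρ k))
    (hmass : ∀ k, ∫⁻ z, ENNReal.ofReal (ρ k z) ∂(μ.prod volume) = 1) :
    ∃ (kj : ℕ → ℕ) (α : ℝ), StrictMono kj ∧ 0 ≤ α ∧ α ≤ 1 ∧
      (∀ ε : ℝ, 0 < ε → ∃ (R : ℝ) (j₀ : ℕ), 0 < R ∧
        ∀ j ≥ j₀,
          α - ε ≤ (∫⁻ z in Set.univ ×ˢ ball (0 : EuclideanSpace ℝ (Fin n)) R,
            ENNReal.ofReal (ρ (kj j) z) ∂(μ.prod volume)).toReal) ∧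
      (∀ R : ℝ, 0 < R → ∀ ε : ℝ, 0 < ε → ∃ j₁ : ℕ,
        ∀ j ≥ j₁,
          (∫⁻ z in Set.univ ×ˢ ball (0 : EuclideanSpace ℝ (Fin n)) R,
            ENNReal.ofReal (ρ (kj j) z) ∂(μ.prod volume)).toReal ≤ α + ε) := by
  -- I k R : mass of ρ k in the tube of radius R
  set I : ℕ → ℝ → ℝ≥0∞ := fun k R =>
    ∫⁻ z in Set.univ ×ˢ ball (0 : EuclideanSpace ℝ (Fin n)) R,
      ENNReal.ofReal (ρ k z) ∂(μ.prod volume) with hI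
  have hIle : ∀ k R, I k R ≤ 1 := by
    intro k R
    calc I k R ≤ ∫⁻ z, ENNReal.ofReal (ρ k z) ∂(μ.prod volume) :=
          setLIntegral_le_lintegral _ _
      _ = 1 := hmass k
  have hIne : ∀ k R, I k R ≠ ⊤ := fun k R => ne_top_of_le_ne_top ENNReal.one_ne_top (hIle k R)
  have hImono : ∀ k {R R' : ℝ}, R ≤ R' → I k R ≤ I k R' := by
    intro k R R' h
    exact lintegral_mono_set (Set.prod_mono subset_rfl (ball_subset_ball h))
  have hF01 : ∀ k m : ℕ, (I k ((m : ℝ) + 1)).toReal ∈ Set.Icc (0:ℝ) 1 := by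
    intro k m
    refine ⟨ENNReal.toReal_nonneg, ?_⟩
    simpa using ENNReal.toReal_mono ENNReal.one_ne_top (hIle k ((m : ℝ) + 1))
  set x : ℕ → (ℕ → Set.Icc (0:ℝ) 1) :=
    fun k m => ⟨(I k ((m : ℝ) + 1)).toReal, hF01 k m⟩ with hx
  obtain ⟨L, -, φ, hφ, hconv⟩ := (isCompact_univ (X := ℕ → Set.Icc (0:ℝ) 1)).tendsto_subseq
    (fun k => Set.mem_univ (x k))
  have hLconv : ∀ m : ℕ,
      Tendsto (fun j => (I (φ j) ((m : ℝ) + 1)).toReal) atTop (𝓝 (L m : ℝ)) := by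
    intro m
    have h1 : Tendsto (fun j => (x ∘ φ) j m) atTop (𝓝 (L m)) :=
      (tendsto_pi_nhds.1 hconv) m
    exact ((continuous_subtype_val.tendsto _).comp h1 : _)
  have hbdd : BddAbove (Set.range fun m : ℕ => (L m : ℝ)) :=
    ⟨1, by rintro y ⟨m, rfl⟩; exact (L m).2.2⟩
  set α : ℝ := ⨆ m : ℕ, (L m : ℝ) with hα
  have hLle : ∀ m : ℕ, (L m : ℝ) ≤ α := fun m => le_ciSup hbdd m
  have hα0 : 0 ≤ α := le_trans (L 0).2.1 (hLle 0)
  have hα1 : α ≤ 1 := ciSup_le fun m => (L m).2.2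
  refine ⟨φ, α, hφ, hα0, hα1, ?_, ?_⟩
  · -- lower bound
    intro ε hε
    obtain ⟨m, hm⟩ := exists_lt_of_lt_ciSup (show α - ε / 2 < α by linarith)
    have hev : ∀ᶠ j in atTop, (L m : ℝ) - ε/2 ≤ (I (φ j) ((m : ℝ) + 1)).toReal :=
      (hLconv m).eventually (eventually_ge_nhds (by linarith))
    obtain ⟨j₀, hj₀⟩ := hev.exists_forall_of_atTop
    refine ⟨(m : ℝ) + 1, j₀, by positivity, fun j hj => ?_⟩
    have := hj₀ j hj
    have hm' : α - ε/2 ≤ (L m : ℝ) := hm.le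
    linarith
  · -- upper bound
    intro R hR ε hε
    set m : ℕ := ⌈R⌉₊ with hmdef
    have hRm : R ≤ (m : ℝ) + 1 := le_trans (Nat.le_ceil R) (by linarith)
    have hev : ∀ᶠ j in atTop, (I (φ j) ((m : ℝ) + 1)).toReal ≤ (L m : ℝ) + ε :=
      (hLconv m).eventually (eventually_le_nhds (by linarith))
    obtain ⟨j₁, hj₁⟩ := hev.exists_forall_of_atTop
    refine ⟨j₁, fun j hj => ?_⟩
    have h1 : (I (φ j) R).toReal ≤ (I (φ j) ((m : ℝ) + 1)).toReal :=
      ENNReal.toReal_mono (hIne _ _) (hImono _ hRm)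
    have h2 := hj₁ j hj
    have h3 := hLle m
    linarith

end
end

section
/- Let (M, μ) be a σ-finite measure space and n ≥ 1. Let ρ : M × ℝⁿ → [0, ∞) be measurable and suppose ρ equals its Steiner symmetrization with respect to M (ρ = ρ*). Then the integral over a tube around a ball is maximized by the centered ball: for every R > 0 and every y₀ ∈ ℝⁿ, ∫_{M × (y₀ + B(0,R))} ρ d(μ ⊗ vol) ≤ ∫_{M × B(0,R)} ρ d(μ ⊗ vol). -/
open MeasureTheory Metric
open scoped RealInnerProductSpace ENNReal

noncomputable section

namespace Stmt18Helper

variable {M : Type*} {n : ℕ}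

/-- The set of positive levels `c` whose superlevel set has volume exceeding `V r`. -/
def SA (ρ : M × EuclideanSpace ℝ (Fin n) → ℝ) (x : M) (r : ℝ) : Set ℝ :=
  {c : ℝ | 0 < c ∧
    volume (ball (0 : EuclideanSpace ℝ (Fin n)) r) < volume {y' | c < ρ (x, y')}}

lemma rho_eq {ρ : M × EuclideanSpace ℝ (Fin n) → ℝ} (hsym : ρ = steiner ρ) (x : M)
    (y : EuclideanSpace ℝ (Fin n)) : ρ (x, y) = sSup ({0} ∪ SA ρ x ‖y‖) := by
  conv_lhs => rw [hsym]
  rfl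

lemma SA_mono {ρ : M × EuclideanSpace ℝ (Fin n) → ℝ} {x : M} {r r' : ℝ} (h : r' ≤ r) :
    SA ρ x r ⊆ SA ρ x r' := fun c hc =>
  ⟨hc.1, lt_of_le_of_lt (measure_mono (ball_subset_ball h)) hc.2⟩

lemma rho_zero {ρ : M × EuclideanSpace ℝ (Fin n) → ℝ} (hsym : ρ = steiner ρ) {x : M}
    {y : EuclideanSpace ℝ (Fin n)} (h : ¬ BddAbove (SA ρ x ‖y‖)) : ρ (x, y) = 0 := by
  rw [rho_eq hsym]
  exact Real.sSup_of_not_bddAbove fun hb => h (hb.mono Set.subset_union_right)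

/-- Key lemma: for a fixed point of Steiner symmetrization, the level sets `SA` are
bounded above at every positive radius. -/
lemma SA_bddAbove {ρ : M × EuclideanSpace ℝ (Fin n) → ℝ} (hsym : ρ = steiner ρ)
    (hn : 1 ≤ n) (x : M) {s₀ : ℝ} (hs₀ : 0 < s₀) : BddAbove (SA ρ x s₀) := by
  haveI : Nonempty (Fin n) := ⟨⟨0, hn⟩⟩
  by_contra hbad
  set V : ℝ → ℝ≥0∞ := fun r => volume (ball (0 : EuclideanSpace ℝ (Fin n)) r) with hV
  set W : ℝ → ℝ≥0∞ := fun c => volume {y' : EuclideanSpace ℝ (Fin n) | c < ρ (x, y')} with hW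
  have star : ∀ c > (0 : ℝ), V s₀ < W c := by
    intro c hc
    obtain ⟨c', hc', hcc'⟩ := not_bddAbove_iff.1 hbad c
    exact lt_of_lt_of_le hc'.2 (measure_mono fun y hy => lt_of_le_of_lt hcc'.le hy)
  have hdown : ∀ {r r' : ℝ}, r' ≤ r → ¬ BddAbove (SA ρ x r) → ¬ BddAbove (SA ρ x r') :=
    fun h hr hb => hr (hb.mono (SA_mono h))
  -- there is a good radius
  have hex : ∃ s₁ : ℝ, BddAbove (SA ρ x s₁) := by
    by_contra hall
    push_neg at hall
    have hW1 : W 1 = 0 := by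
      have he : {y' : EuclideanSpace ℝ (Fin n) | (1:ℝ) < ρ (x, y')} = ∅ := by
        ext y
        simp only [Set.mem_setOf_eq, Set.mem_empty_iff_false, iff_false, not_lt]
        rw [rho_zero hsym (hall _)]
        norm_num
      rw [hW]
      simp [he]
    have := star 1 one_pos
    rw [hW1] at this
    exact absurd this (by simp)
  set bad : Set ℝ := {s : ℝ | ¬ BddAbove (SA ρ x s)} with hbadset
  obtain ⟨s₁, hs₁⟩ := hex
  have hbddbad : BddAbove bad := by
    refine ⟨s₁, fun s hs => ?_⟩
    by_contra h
    push_neg at h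
    exact (hdown h.le hs) hs₁
  have hbadne : bad.Nonempty := ⟨s₀, hbad⟩
  set b : ℝ := sSup bad with hb
  have hbs₀ : s₀ ≤ b := le_csSup hbddbad hbad
  have hb0 : (0:ℝ) < b := lt_of_lt_of_le hs₀ hbs₀
  have hgood : ∀ s : ℝ, b < s → BddAbove (SA ρ x s) := by
    intro s hs
    by_contra h
    exact absurd (le_csSup hbddbad h) (not_le.2 hs)
  have hout : ∀ y : EuclideanSpace ℝ (Fin n), 0 < ρ (x, y) → b ≤ ‖y‖ := by
    intro y hy
    by_contra h
    push_neg at h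
    obtain ⟨s, hs, hys⟩ := exists_lt_of_lt_csSup hbadne h
    rw [rho_zero hsym (hdown hys.le hs)] at hy
    exact lt_irrefl _ hy
  -- volume formula
  have hVform : ∀ r : ℝ, 0 ≤ r →
      V r = ENNReal.ofReal (r ^ n) * volume (ball (0 : EuclideanSpace ℝ (Fin n)) 1) := by
    intro r hr
    rw [hV]
    simp only
    rw [Measure.addHaar_ball _ _ hr, finrank_euclideanSpace_fin]
  have hn' : (n : ℕ) ≠ 0 := by omega
  set s' : ℝ := (b ^ n + s₀ ^ n) ^ ((n : ℝ)⁻¹) with hs'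
  have hX : (0:ℝ) ≤ b ^ n + s₀ ^ n := by positivity
  have hs'pow : s' ^ n = b ^ n + s₀ ^ n := by
    rw [hs', ← Real.rpow_natCast ((b ^ n + s₀ ^ n) ^ ((n : ℝ)⁻¹)) n,
      ← Real.rpow_mul hX, inv_mul_cancel₀ (by exact_mod_cast hn'), Real.rpow_one]
  have hs'0 : 0 ≤ s' := Real.rpow_nonneg hX _
  have hbs' : b < s' := by
    have h1 : b ^ n < s' ^ n := by
      rw [hs'pow]
      have : (0:ℝ) < s₀ ^ n := by positivity
      linarith
    by_contra h
    push_neg at h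
    exact absurd (pow_le_pow_left₀ hs'0 h n) (not_le.2 h1)
  have hVs' : V s' = V b + V s₀ := by
    rw [hVform s' hs'0, hVform b hb0.le, hVform s₀ hs₀.le, hs'pow,
      ENNReal.ofReal_add (by positivity) (by positivity), add_mul]
  -- for every c there is a point of the superlevel set with norm ≥ s'
  have key : ∀ c : ℝ, 0 < c → ∃ y : EuclideanSpace ℝ (Fin n), c < ρ (x, y) ∧ s' ≤ ‖y‖ := by
    intro c hc
    by_contra h
    push_neg at h
    have hsub : {y : EuclideanSpace ℝ (Fin n) | c < ρ (x, y)} ⊆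
        ball (0 : EuclideanSpace ℝ (Fin n)) s' \ ball (0 : EuclideanSpace ℝ (Fin n)) b := by
      intro y hy
      refine ⟨mem_ball_zero_iff.2 (h y hy), fun hyb => ?_⟩
      exact absurd (hout y (hc.trans hy)) (not_le.2 (mem_ball_zero_iff.1 hyb))
    have hle : W c ≤ V s' - V b := by
      calc W c ≤ volume (ball (0 : EuclideanSpace ℝ (Fin n)) s'
            \ ball (0 : EuclideanSpace ℝ (Fin n)) b) := measure_mono hsub
        _ = V s' - V b := measure_diff (ball_subset_ball hbs'.le)
            measurableSet_ball.nullMeasurableSet measure_ball_lt_top.ne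
    rw [hVs', ENNReal.add_sub_cancel_left measure_ball_lt_top.ne] at hle
    exact absurd (star c hc) (not_lt.2 hle)
  set g : ℝ := sSup ({0} ∪ SA ρ x s') with hg
  have hbddg : BddAbove ({0} ∪ SA ρ x s') :=
    BddAbove.union bddAbove_singleton (hgood s' hbs')
  have hg0 : 0 ≤ g := le_csSup hbddg (Set.mem_union_left _ rfl)
  have : g + 1 < g := by
    obtain ⟨y, hy, hys⟩ := key (g + 1) (by linarith)
    have hbddy : BddAbove (SA ρ x ‖y‖) := by
      by_contra hbb
      rw [rho_zero hsym hbb] at hy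
      linarith
    have hyy : g + 1 < sSup ({0} ∪ SA ρ x ‖y‖) := by
      rw [← rho_eq hsym]
      exact hy
    obtain ⟨c', hc'mem, hc'⟩ :=
      exists_lt_of_lt_csSup ((Set.singleton_nonempty (0:ℝ)).inl) hyy
    have hc'A : c' ∈ SA ρ x ‖y‖ := by
      rcases hc'mem with h | h
      · exfalso
        rw [Set.mem_singleton_iff] at h
        rw [h] at hc'
        linarith
      · exact h
    have hc's' : c' ∈ SA ρ x s' := SA_mono hys hc'A
    calc g + 1 < c' := hc'
      _ ≤ g := le_csSup hbddg (Set.mem_union_right _ hc's')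
  linarith

/-- Radiality: superlevel sets of a Steiner-symmetric density are radial
(away from the origin). -/
lemma radial {ρ : M × EuclideanSpace ℝ (Fin n) → ℝ} (hsym : ρ = steiner ρ) (hn : 1 ≤ n)
    (x : M) {t : ℝ} (ht : 0 ≤ t) {y w : EuclideanSpace ℝ (Fin n)}
    (hy : t < ρ (x, y)) (hw0 : 0 < ‖w‖) (hwy : ‖w‖ ≤ ‖y‖) : t < ρ (x, w) := by
  have hyy : t < sSup ({0} ∪ SA ρ x ‖y‖) := by rw [← rho_eq hsym]; exact hy
  obtain ⟨c, hcmem, hc⟩ := exists_lt_of_lt_csSup ((Set.singleton_nonempty (0:ℝ)).inl) hyy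
  have hcA : c ∈ SA ρ x ‖y‖ := by
    rcases hcmem with h | h
    · exfalso
      rw [Set.mem_singleton_iff] at h
      rw [h] at hc
      linarith
    · exact h
  have hcw : c ∈ SA ρ x ‖w‖ := SA_mono hwy hcA
  have hbdd : BddAbove ({0} ∪ SA ρ x ‖w‖) :=
    BddAbove.union bddAbove_singleton (SA_bddAbove hsym hn x hw0)
  calc t < c := hc
    _ ≤ sSup ({0} ∪ SA ρ x ‖w‖) := le_csSup hbdd (Set.mem_union_right _ hcw)
    _ = ρ (x, w) := (rho_eq hsym x w).symm

/-- Superlevel-set comparison: the centered ball captures at least as much of each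
superlevel set as any translated ball of the same radius. -/
lemma level_le {ρ : M × EuclideanSpace ℝ (Fin n) → ℝ} (hsym : ρ = steiner ρ) (hn : 1 ≤ n)
    (hpos : ∀ z, 0 ≤ ρ z) (x : M) (t : ℝ) {R : ℝ} (hR : 0 < R)
    (y₀ : EuclideanSpace ℝ (Fin n)) :
    volume ({y : EuclideanSpace ℝ (Fin n) | t < ρ (x, y)} ∩ ball y₀ R) ≤
      volume ({y : EuclideanSpace ℝ (Fin n) | t < ρ (x, y)} ∩
        ball (0 : EuclideanSpace ℝ (Fin n)) R) := by
  haveI : Nonempty (Fin n) := ⟨⟨0, hn⟩⟩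
  have hballs : volume (ball y₀ R) = volume (ball (0 : EuclideanSpace ℝ (Fin n)) R) := by
    rw [Measure.addHaar_ball _ _ hR.le, Measure.addHaar_ball _ _ hR.le]
  by_cases ht : 0 ≤ t
  · by_cases hsubset : ∃ w ∈ ball (0 : EuclideanSpace ℝ (Fin n)) R, w ≠ 0 ∧ ¬ (t < ρ (x, w))
    · obtain ⟨w, hwR, hw0, hwt⟩ := hsubset
      have hS : {y : EuclideanSpace ℝ (Fin n) | t < ρ (x, y)} ⊆
          ball (0 : EuclideanSpace ℝ (Fin n)) R := by
        intro y hy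
        rw [mem_ball_zero_iff]
        by_contra h
        push_neg at h
        have hwy : ‖w‖ ≤ ‖y‖ := le_trans (mem_ball_zero_iff.1 hwR).le h
        exact hwt (radial hsym hn x ht hy (norm_pos_iff.2 hw0) hwy)
      calc volume ({y : EuclideanSpace ℝ (Fin n) | t < ρ (x, y)} ∩ ball y₀ R)
          ≤ volume {y : EuclideanSpace ℝ (Fin n) | t < ρ (x, y)} :=
            measure_mono Set.inter_subset_left
        _ = volume ({y : EuclideanSpace ℝ (Fin n) | t < ρ (x, y)} ∩
            ball (0 : EuclideanSpace ℝ (Fin n)) R) := by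
            rw [Set.inter_eq_self_of_subset_left hS]
    · push_neg at hsubset
      have h0vol : volume ({(0 : EuclideanSpace ℝ (Fin n))} : Set _) = 0 := by
        rw [← Metric.closedBall_zero, Measure.addHaar_closedBall _ _ le_rfl,
          finrank_euclideanSpace_fin, zero_pow (by omega : n ≠ 0)]
        simp
      have h2 : volume ({y : EuclideanSpace ℝ (Fin n) | t < ρ (x, y)} ∩
          ball (0 : EuclideanSpace ℝ (Fin n)) R) =
          volume (ball (0 : EuclideanSpace ℝ (Fin n)) R) := by
        apply le_antisymm (measure_mono Set.inter_subset_right)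
        calc volume (ball (0 : EuclideanSpace ℝ (Fin n)) R)
            = volume (ball (0 : EuclideanSpace ℝ (Fin n)) R \
              {(0 : EuclideanSpace ℝ (Fin n))}) := (measure_diff_null h0vol).symm
          _ ≤ volume ({y : EuclideanSpace ℝ (Fin n) | t < ρ (x, y)} ∩
              ball (0 : EuclideanSpace ℝ (Fin n)) R) := by
              apply measure_mono
              rintro w ⟨hw, hw0⟩
              exact ⟨hsubset w hw (by simpa using hw0), hw⟩
      rw [h2, ← hballs]
      exact measure_mono Set.inter_subset_right
  · push_neg at ht
    have hall : ∀ y : EuclideanSpace ℝ (Fin n), t < ρ (x, y) :=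
      fun y => lt_of_lt_of_le ht (hpos _)
    have huniv : {y : EuclideanSpace ℝ (Fin n) | t < ρ (x, y)} = Set.univ := by
      ext y; simp [hall y]
    rw [huniv, Set.univ_inter, Set.univ_inter, hballs]

end Stmt18Helper

open Stmt18Helper in
/-- for a Steiner symmetric density, the mass in a tube over a ball of
radius `R` is maximized when the ball is centered at the origin. -/
theorem stmt_18 {M : Type*} [MeasurableSpace M] (μ : Measure M) [SigmaFinite μ]
    {n : ℕ} (hn : 1 ≤ n)
    (ρ : M × EuclideanSpace ℝ (Fin n) → ℝ)
    (hmeas : Measurable ρ) (hpos : ∀ z, 0 ≤ ρ z)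
    (hsym : ρ = steiner ρ)
    (R : ℝ) (hR : 0 < R) (y₀ : EuclideanSpace ℝ (Fin n)) :
    ∫⁻ z in Set.univ ×ˢ ball y₀ R, ENNReal.ofReal (ρ z) ∂(μ.prod volume) ≤
      ∫⁻ z in Set.univ ×ˢ ball (0 : EuclideanSpace ℝ (Fin n)) R,
        ENNReal.ofReal (ρ z) ∂(μ.prod volume) := by
  have hf : Measurable fun z : M × EuclideanSpace ℝ (Fin n) => ENNReal.ofReal (ρ z) :=
    ENNReal.measurable_ofReal.comp hmeas
  have e1 : ∀ B : Set (EuclideanSpace ℝ (Fin n)),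
      ∫⁻ z in Set.univ ×ˢ B, ENNReal.ofReal (ρ z) ∂(μ.prod volume) =
        ∫⁻ x, (∫⁻ y in B, ENNReal.ofReal (ρ (x, y))) ∂μ := by
    intro B
    rw [← Measure.prod_restrict, Measure.restrict_univ]
    exact lintegral_prod _ hf.aemeasurable
  rw [e1, e1]
  apply lintegral_mono
  intro x
  dsimp only
  have hfm : Measurable fun y : EuclideanSpace ℝ (Fin n) => ρ (x, y) :=
    hmeas.comp measurable_prodMk_left
  rw [lintegral_eq_lintegral_meas_lt _ (ae_of_all _ fun y => hpos _) hfm.aemeasurable,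
    lintegral_eq_lintegral_meas_lt _ (ae_of_all _ fun y => hpos _) hfm.aemeasurable]
  apply lintegral_mono
  intro t
  dsimp only
  rw [Measure.restrict_apply (measurableSet_lt measurable_const hfm),
    Measure.restrict_apply (measurableSet_lt measurable_const hfm)]
  exact level_le hsym hn hpos x t hR y₀
end
end
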